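/- For every monotone map φ : [n] → [1], the map f_φ commutes with the differentials and the augmentation, hence is an endomorphism of the augmented chain complex C(m+1+n). -/

import Mathlib

/-!
We represent the (augmented) normalized chain complex `C(N)` of the standard `N`-simplex by the
free abelian group on the finite subsets of `{0,…,N}`, a subset of cardinality `p+1` standing for
the strictly increasing `(p+1)`-tuple of its elements (a `p`-chain); the differential is the
alternating sum of the tuples obtained by deleting one entry (and vanishes on `0`-chains), and
the augmentation sends every `0`-chain basis element to `1` (and vanishes in higher degrees).
-/

noncomputable section

abbrev Ch (α : Type) := Finset α →₀ ℤ

/-- index of `a` in `s`: the number of smaller elements of `s`. -/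
def idx {α : Type} [LinearOrder α] (s : Finset α) (a : α) : ℕ :=
  (s.filter (fun b => b < a)).card

/-- value of the simplicial differential on a basis tuple:
`d(i₀,…,i_p) = Σₖ (−1)^k (i₀,…,î_k,…,i_p)` for `p ≥ 1`, and `0` on `0`-chains. -/
def dAux {α : Type} [LinearOrder α] (s : Finset α) : Ch α :=
  if 2 ≤ s.card then
    ∑ a ∈ s, ((-1 : ℤ) ^ (idx s a)) • Finsupp.single (s.erase a) (1 : ℤ)
  else 0

/-- the differential of `C(N)`. -/
def chD (α : Type) [LinearOrder α] : Ch α →ₗ[ℤ] Ch α :=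
  Finsupp.lift _ ℤ _ dAux

/-- the augmentation of `C(N)`: `e(i₀) = 1` on `0`-chains, `0` in higher degrees. -/
def chE (α : Type) : Ch α →ₗ[ℤ] ℤ :=
  Finsupp.lift _ ℤ _ (fun s => if s.card = 1 then (1 : ℤ) else 0)

/-- The chain map `c(ψ) : C(N') → C(N)` induced by a (monotone) map `ψ`,
`(i₀,…,i_p) ↦ (ψ(i₀),…,ψ(i_p))`, with the convention that a tuple with a repeated entry
denotes `0`. -/
def chMap {α β : Type} [DecidableEq β] (ψ : α → β) : Ch α →ₗ[ℤ] Ch β :=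
  Finsupp.lift _ ℤ _ (fun s =>
    if (s.image ψ).card = s.card then Finsupp.single (s.image ψ) (1 : ℤ) else 0)

/-- the element `m` of `{0,…,m+1+n}`. -/
def elM (m n : ℕ) : Fin (m+1+n+1) := ⟨m, by omega⟩

/-- `f_n` on a basis tuple `(i₀ < … < i_p)`, following the case analysis of the paper
(expressed via the sets of entries `< m` and `> m`):
`f_n = id` if `i_p ≤ m` or `m ≤ i₀`; `f_n(i₀,i₁) = (i₀,m) + (m,i₁)` if `p = 1` and
`i₀ < m < i₁`; `f_n(i₀,…,i_p) = (m,i₁,…,i_p)` if `p > 1` and `i₀ < m < i₁`;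
`f_n(i₀,…,i_p) = (i₀,…,i_{p−1},m)` if `p > 1` and `i_{p−1} < m < i_p`; `f_n = 0` otherwise
(i.e. if `i₁ ≤ m ≤ i_{p−1}`). -/
def fnAux (m n : ℕ) (s : Finset (Fin (m+1+n+1))) : Ch (Fin (m+1+n+1)) :=
  let M := elM m n
  let lo := s.filter (fun i => i < M)
  let hi := s.filter (fun i => M < i)
  if lo.card = 0 ∨ hi.card = 0 then Finsupp.single s 1
  else if lo.card = 1 ∧ hi.card = 1 ∧ M ∉ s then
    Finsupp.single (insert M lo) 1 + Finsupp.single (insert M hi) 1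
  else if lo.card = 1 ∧ 2 ≤ hi.card ∧ M ∉ s then Finsupp.single (insert M hi) 1
  else if 2 ≤ lo.card ∧ hi.card = 1 ∧ M ∉ s then Finsupp.single (insert M lo) 1
  else 0

/-- the graded `ℤ`-linear endomorphism `f_n` of `C(m+1+n)`. -/
def fN (m n : ℕ) : Ch (Fin (m+1+n+1)) →ₗ[ℤ] Ch (Fin (m+1+n+1)) :=
  Finsupp.lift _ ℤ _ (fnAux m n)

/-- `φ̄ : [m+1+n] → [1]`, extending `φ : [n] → [1]` by `0` on `{0,…,m}`. -/
def phibar (m n : ℕ) (φ : Fin (n+1) → Fin 2) : Fin (m+1+n+1) → Fin 2 := fun i =>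
  if (i : ℕ) ≤ m then 0 else φ ⟨(i : ℕ) - (m + 1), by have := i.isLt; omega⟩

/-- concatenation on the right with the fixed tuple `t`, extended `ℤ`-bilinearly, with the
repeated-entry convention (a concatenation which is not strictly increasing is `0`). -/
def concatR {α : Type} [LinearOrder α] (t : Finset α) : Ch α →ₗ[ℤ] Ch α :=
  Finsupp.lift _ ℤ _ (fun u =>
    if ∀ x ∈ u, ∀ y ∈ t, x < y then Finsupp.single (u ∪ t) (1 : ℤ) else 0)

/-- `f_φ` on a basis tuple `s`: writing `s` as the concatenation of its prefix
`s₀ = (i₀,…,i_{k_φ})` on which `φ̄` vanishes and its suffix `s₁ = (i_{k_φ+1},…,i_p)` on which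
`φ̄` equals `1`, set `f_φ(s) = f_n(s₀)·s₁` (in particular `f_φ(s) = s` when `k_φ = −1` and
`f_φ(s) = f_n(s)` when `k_φ = p`). -/
def fPhiAux (m n : ℕ) (φ : Fin (n+1) → Fin 2) (s : Finset (Fin (m+1+n+1))) :
    Ch (Fin (m+1+n+1)) :=
  concatR (s.filter (fun i => phibar m n φ i = 1))
    (fnAux m n (s.filter (fun i => phibar m n φ i = 0)))

/-- the graded `ℤ`-linear endomorphism `f_φ` of `C(m+1+n)`. -/
def fPhi (m n : ℕ) (φ : Fin (n+1) → Fin 2) :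
    Ch (Fin (m+1+n+1)) →ₗ[ℤ] Ch (Fin (m+1+n+1)) :=
  Finsupp.lift _ ℤ _ (fPhiAux m n φ)

/-!
Write `c(ψ)` for the chain map induced by a monotone self-map `ψ` of `[m+1+n]`, a simplex
with a repeated vertex being `0`. Going through the cases of its definition, one finds
`f_n = c(min(·, m)) + c(max(·, m)) - c(m)`. Since `φ̄⁻¹(0)` is an initial segment containing
`m`, the same identity holds for `f_φ` once each map is replaced by the map that agrees with
it on `φ̄⁻¹(0)` and is the identity on `φ̄⁻¹(1)`; these are again monotone. A chain map `c(ψ)`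
commutes with the differential because the two faces of a degenerate simplex that survive
`ψ` cancel, and it preserves the augmentation; hence so does `f_φ`.
-/

open Finsupp

section Basis

variable {α β : Type}

lemma lift_single_one {M : Type} [AddCommMonoid M] [Module ℤ M] (f : Finset α → M)
    (s : Finset α) : Finsupp.lift M ℤ (Finset α) f (single s 1) = f s := by
  simp

lemma Ch.hom_ext {M : Type} [AddCommMonoid M] [Module ℤ M] {f g : Ch α →ₗ[ℤ] M}
    (h : ∀ s : Finset α, f (single s 1) = g (single s 1)) : f = g :=
  Finsupp.lhom_ext' fun s => LinearMap.ext_ring (h s)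

def imageChain [DecidableEq β] (ψ : α → β) (s : Finset α) : Ch β :=
  if (s.image ψ).card = s.card then single (s.image ψ) 1 else 0

lemma imageChain_of_injOn [DecidableEq β] {ψ : α → β} {s : Finset α} (h : Set.InjOn ψ s) :
    imageChain ψ s = single (s.image ψ) 1 :=
  if_pos (Finset.card_image_iff.mpr h)

lemma imageChain_of_not_injOn [DecidableEq β] {ψ : α → β} {s : Finset α}
    (h : ¬ Set.InjOn ψ s) : imageChain ψ s = 0 :=
  if_neg (mt Finset.card_image_iff.mp h)

lemma imageChain_congr [DecidableEq β] {ψ ψ' : α → β} {s : Finset α}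
    (h : ∀ i ∈ s, ψ i = ψ' i) : imageChain ψ s = imageChain ψ' s := by
  simp only [imageChain, Finset.image_congr (fun i hi => h i hi)]

lemma imageChain_id [DecidableEq α] (s : Finset α) :
    imageChain (fun i => i) s = single s 1 := by
  rw [imageChain_of_injOn fun _ _ _ _ h => h, Finset.image_id']

lemma chMap_single [DecidableEq β] (ψ : α → β) (s : Finset α) :
    chMap ψ (single s 1) = imageChain ψ s := lift_single_one _ _

lemma chD_single [LinearOrder α] (s : Finset α) : chD α (single s 1) = dAux s :=
  lift_single_one _ _

lemma chE_single (s : Finset α) : chE α (single s 1) = if s.card = 1 then 1 else 0 :=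
  lift_single_one _ _

lemma concatR_single [LinearOrder α] (t u : Finset α) :
    concatR t (single u 1) = if ∀ x ∈ u, ∀ y ∈ t, x < y then single (u ∪ t) 1 else 0 :=
  lift_single_one _ _

lemma fPhi_single (m n : ℕ) (φ : Fin (n+1) → Fin 2) (s : Finset (Fin (m+1+n+1))) :
    fPhi m n φ (single s 1) = fPhiAux m n φ s := lift_single_one _ _

end Basis

section MonotoneChainMap

variable {α β : Type} [LinearOrder α] [LinearOrder β] {ψ : α → β} {s : Finset α}

lemma idx_eq_succ_of_adjacent {a b : α} (ha : a ∈ s) (hab : a < b)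
    (hgap : ∀ c ∈ s, a < c → b ≤ c) : idx s b = idx s a + 1 := by
  have : s.filter (· < b) = insert a (s.filter (· < a)) := by
    ext c
    simp only [Finset.mem_filter, Finset.mem_insert]
    constructor
    · rintro ⟨hc, hcb⟩
      rcases lt_trichotomy c a with h | rfl | h
      exacts [Or.inr ⟨hc, h⟩, Or.inl rfl, absurd (hgap c hc h) (not_le.mpr hcb)]
    · rintro (rfl | ⟨hc, hca⟩)
      exacts [⟨ha, hab⟩, ⟨hc, hca.trans hab⟩]
  rw [idx, idx, this, Finset.card_insert_of_notMem (by simp)]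

lemma idx_image (hψ : Monotone ψ) (hinj : Set.InjOn ψ s) {a : α} (ha : a ∈ s) :
    idx (s.image ψ) (ψ a) = idx s a := by
  have hlt : ∀ x ∈ s, ψ x < ψ a ↔ x < a := fun x hx =>
    ⟨fun h => lt_of_not_ge fun h' => h.not_ge (hψ h'),
     fun h => (hψ h.le).lt_of_ne fun h' => h.ne (hinj hx ha h')⟩
  have : (s.image ψ).filter (· < ψ a) = (s.filter (· < a)).image ψ := by
    ext y
    simp only [Finset.mem_filter, Finset.mem_image]
    constructor
    · rintro ⟨⟨x, hx, rfl⟩, h⟩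
      exact ⟨x, ⟨hx, (hlt x hx).mp h⟩, rfl⟩
    · rintro ⟨x, ⟨hx, h⟩, rfl⟩
      exact ⟨⟨x, hx, rfl⟩, (hlt x hx).mpr h⟩
  rw [idx, idx, this,
    Finset.card_image_of_injOn (hinj.mono (Finset.coe_subset.mpr (Finset.filter_subset _ _)))]

lemma Set.InjOn.image_erase (hinj : Set.InjOn ψ s) {a : α} (ha : a ∈ s) :
    (s.erase a).image ψ = (s.image ψ).erase (ψ a) := by
  ext y
  simp only [Finset.mem_image, Finset.mem_erase]
  constructor
  · rintro ⟨x, ⟨hxa, hx⟩, rfl⟩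
    exact ⟨fun h => hxa (hinj hx ha h), x, hx, rfl⟩
  · rintro ⟨hy, x, hx, rfl⟩
    exact ⟨x, ⟨fun h => hy (h ▸ rfl), hx⟩, rfl⟩

lemma exists_adjacent_of_not_injOn (hψ : Monotone ψ) (h : ¬ Set.InjOn ψ s) :
    ∃ a ∈ s, ∃ b ∈ s, a < b ∧ ψ a = ψ b ∧ ∀ c ∈ s, a < c → b ≤ c := by
  obtain ⟨x, hx, y, hy, hxy, hne⟩ : ∃ x ∈ s, ∃ y ∈ s, ψ x = ψ y ∧ x ≠ y := by
    simpa [Set.InjOn] using h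
  wlog hlt : x < y generalizing x y
  · exact this y hy x hx hxy.symm hne.symm (hne.lt_or_gt.resolve_left hlt)
  have hne' : (s.filter (x < ·)).Nonempty := ⟨y, by simp [hy, hlt]⟩
  set b := (s.filter (x < ·)).min' hne'
  obtain ⟨hb, hxb⟩ := Finset.mem_filter.mp (Finset.min'_mem _ hne')
  have hby : b ≤ y := Finset.min'_le _ _ (by simp [hy, hlt])
  refine ⟨x, hx, b, hb, hxb, le_antisymm (hψ hxb.le) (hxy ▸ hψ hby), fun c hc hxc => ?_⟩
  exact Finset.min'_le _ _ (by simp [hc, hxc])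

lemma image_erase_of_apply_eq {a b : α} (hb : b ∈ s) (hne : b ≠ a) (h : ψ a = ψ b) :
    (s.erase a).image ψ = s.image ψ := by
  refine (Finset.image_subset_image (Finset.erase_subset a s)).antisymm fun z hz => ?_
  obtain ⟨x, hx, rfl⟩ := Finset.mem_image.mp hz
  by_cases hxa : x = a
  · exact Finset.mem_image.mpr ⟨b, Finset.mem_erase.mpr ⟨hne, hb⟩, by rw [hxa, h]⟩
  · exact Finset.mem_image_of_mem ψ (Finset.mem_erase.mpr ⟨hxa, hx⟩)

/-- `ψ` identifies two adjacent vertices `a < b` of `s`, so only the faces `s.erase a` and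
`s.erase b` can survive; they have the same image and opposite signs. -/
lemma sum_imageChain_erase_eq_zero (hψ : Monotone ψ) (h : ¬ Set.InjOn ψ s) :
    ∑ a ∈ s, (-1 : ℤ) ^ idx s a • imageChain ψ (s.erase a) = 0 := by
  obtain ⟨a, ha, b, hb, hab, hψab, hgap⟩ := exists_adjacent_of_not_injOn hψ h
  rw [Finset.sum_eq_add_of_mem a b ha hb hab.ne fun c _ hc => ?_]
  · have hface : imageChain ψ (s.erase b) = imageChain ψ (s.erase a) := by
      rw [imageChain, imageChain, image_erase_of_apply_eq ha hab.ne hψab.symm,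
        image_erase_of_apply_eq hb hab.ne' hψab, Finset.card_erase_of_mem ha,
        Finset.card_erase_of_mem hb]
    rw [hface, idx_eq_succ_of_adjacent ha hab hgap, pow_succ, mul_neg_one, neg_smul,
      add_neg_cancel]
  · have hcollapse : ¬ Set.InjOn ψ (s.erase c) := fun hinj =>
      hab.ne (hinj (by simp [ha, hc.1.symm]) (by simp [hb, hc.2.symm]) hψab)
    rw [imageChain_of_not_injOn hcollapse, smul_zero]

lemma chD_imageChain (hψ : Monotone ψ) (s : Finset α) :
    chD β (imageChain ψ s) = chMap ψ (dAux s) := by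
  by_cases hinj : Set.InjOn ψ s
  · have hcard : (s.image ψ).card = s.card := Finset.card_image_iff.mpr hinj
    rw [imageChain_of_injOn hinj, chD_single, dAux, dAux, hcard]
    split_ifs
    · rw [map_sum, Finset.sum_image fun x hx y hy => hinj hx hy]
      refine Finset.sum_congr rfl fun a ha => ?_
      rw [map_smul, chMap_single, imageChain_of_injOn (hinj.mono (by simp)),
        hinj.image_erase ha, idx_image hψ hinj ha]
    · rw [map_zero]
  · have htwo : 2 ≤ s.card := by
      by_contra hlt
      exact hinj fun x hx y hy _ => Finset.card_le_one.mp (by omega) x hx y hy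
    rw [imageChain_of_not_injOn hinj, map_zero, dAux, if_pos htwo, map_sum]
    simp only [map_smul, chMap_single]
    exact (sum_imageChain_erase_eq_zero hψ hinj).symm

theorem chD_comp_chMap (hψ : Monotone ψ) : (chD β).comp (chMap ψ) = (chMap ψ).comp (chD α) :=
  Ch.hom_ext fun s => by
    rw [LinearMap.comp_apply, LinearMap.comp_apply, chMap_single, chD_single,
      chD_imageChain hψ]

end MonotoneChainMap

theorem chE_comp_chMap {α β : Type} [DecidableEq β] (ψ : α → β) :
    (chE β).comp (chMap ψ) = chE α :=
  Ch.hom_ext fun s => by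
    rw [LinearMap.comp_apply, chMap_single, chE_single]
    by_cases hinj : Set.InjOn ψ s
    · rw [imageChain_of_injOn hinj, chE_single, Finset.card_image_of_injOn hinj]
    · have hcard : s.card ≠ 1 := fun h1 =>
        hinj fun x hx y hy _ => Finset.card_le_one.mp h1.le x hx y hy
      rw [imageChain_of_not_injOn hinj, map_zero, if_neg hcard]

section Truncation

variable {α : Type} [LinearOrder α] (M : α)

lemma card_eq_card_filter_lt_add_card_filter_gt (s : Finset α) :
    s.card = (s.filter (· < M)).card + (s.filter (M < ·)).card + if M ∈ s then 1 else 0 := by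
  have hgt : s.filter (M < ·) = (s.filter (¬ · < M)).erase M := by
    ext x
    simp only [Finset.mem_filter, Finset.mem_erase, not_lt]
    grind
  rw [hgt, ← Finset.card_filter_add_card_filter_not (s := s) (p := (· < M))]
  by_cases hM : M ∈ s
  · rw [if_pos hM, add_assoc, Finset.card_erase_add_one (by simpa using hM)]
  · rw [if_neg hM, Finset.erase_eq_of_notMem (by simp [hM]), add_zero]

lemma imageChain_min {s : Finset α} (hH : ∃ i ∈ s, M < i) :
    imageChain (min · M) s =
      if (s.filter (M < ·)).card = 1 ∧ M ∉ s then single (insert M (s.filter (· < M))) 1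
      else 0 := by
  have himage : s.image (min · M) = insert M (s.filter (· < M)) := by
    ext x
    simp only [Finset.mem_image, Finset.mem_insert, Finset.mem_filter]
    grind
  obtain ⟨i, hi, hMi⟩ := hH
  have hpos : 0 < (s.filter (M < ·)).card := Finset.card_pos.mpr ⟨i, by simp [hi, hMi]⟩
  have hcard := card_eq_card_filter_lt_add_card_filter_gt M s
  rw [imageChain, himage, Finset.card_insert_of_notMem (by simp)]
  by_cases hM : M ∈ s <;>
    simp only [hM, not_true_eq_false, not_false_eq_true, and_false, and_true, if_true, if_false]
      at hcard ⊢ <;>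
    split_ifs <;> first | rfl | omega

lemma imageChain_max {s : Finset α} (hL : ∃ i ∈ s, i < M) :
    imageChain (max · M) s =
      if (s.filter (· < M)).card = 1 ∧ M ∉ s then single (insert M (s.filter (M < ·))) 1
      else 0 := by
  have himage : s.image (max · M) = insert M (s.filter (M < ·)) := by
    ext x
    simp only [Finset.mem_image, Finset.mem_insert, Finset.mem_filter]
    grind
  obtain ⟨i, hi, hiM⟩ := hL
  have hpos : 0 < (s.filter (· < M)).card := Finset.card_pos.mpr ⟨i, by simp [hi, hiM]⟩
  have hcard := card_eq_card_filter_lt_add_card_filter_gt M s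
  rw [imageChain, himage, Finset.card_insert_of_notMem (by simp)]
  by_cases hM : M ∈ s <;>
    simp only [hM, not_true_eq_false, not_false_eq_true, and_false, and_true, if_true, if_false]
      at hcard ⊢ <;>
    split_ifs <;> first | rfl | omega

end Truncation

theorem fnAux_eq (m n : ℕ) (s : Finset (Fin (m+1+n+1))) :
    fnAux m n s = imageChain (min · (elM m n)) s + imageChain (max · (elM m n)) s
      - imageChain (fun _ => elM m n) s := by
  simp only [fnAux]
  generalize elM m n = M
  by_cases hL : ∀ i ∈ s, M ≤ i
  · have hlo : (s.filter (· < M)).card = 0 := by simpa using hL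
    rw [if_pos (Or.inl hlo), imageChain_congr fun i hi => min_eq_right (hL i hi),
      imageChain_congr (ψ' := fun i => i) fun i hi => max_eq_left (hL i hi), imageChain_id,
      add_sub_cancel_left]
  by_cases hH : ∀ i ∈ s, i ≤ M
  · have hhi : (s.filter (M < ·)).card = 0 := by simpa using hH
    rw [if_pos (Or.inr hhi), imageChain_congr fun i hi => max_eq_right (hH i hi),
      imageChain_congr (ψ' := fun i => i) fun i hi => min_eq_left (hH i hi), imageChain_id,
      add_sub_cancel_right]
  push Not at hL hH
  obtain ⟨l, hl, hlM⟩ := hL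
  obtain ⟨h, hh, hMh⟩ := hH
  have hconst : imageChain (fun _ => M) s = 0 :=
    imageChain_of_not_injOn fun hinj => (hlM.trans hMh).ne (hinj hl hh rfl)
  have hlo : 0 < (s.filter (· < M)).card := Finset.card_pos.mpr ⟨l, by simp [hl, hlM]⟩
  have hhi : 0 < (s.filter (M < ·)).card := Finset.card_pos.mpr ⟨h, by simp [hh, hMh]⟩
  rw [imageChain_min M ⟨h, hh, hMh⟩, imageChain_max M ⟨l, hl, hlM⟩, hconst, sub_zero,
    if_neg (by omega)]
  by_cases hM : M ∈ s
  · simp [hM]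
  · simp only [hM, not_false_eq_true, and_true]
    split_ifs <;> first | omega | simp [add_comm]

section LowerSetPiecewise

variable {α : Type} [LinearOrder α] {D : Set α}

lemma IsLowerSet.mapsTo_min (hD : IsLowerSet D) (M : α) : Set.MapsTo (min · M) D D :=
  fun i hi => hD (min_le_left i M) hi

lemma Set.mapsTo_max_of_mem {M : α} (hM : M ∈ D) : Set.MapsTo (max · M) D D := fun i hi => by
  rcases max_choice i M with h | h <;> simp only [h] <;> assumption

variable [DecidablePred (· ∈ D)] {ψ : α → α}

lemma Monotone.piecewise_id_of_isLowerSet (hD : IsLowerSet D) (hψ : Monotone ψ)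
    (hmaps : Set.MapsTo ψ D D) : Monotone (D.piecewise ψ id) := by
  intro i j hij
  by_cases hj : j ∈ D
  · rw [Set.piecewise_eq_of_mem _ _ _ (hD hij hj), Set.piecewise_eq_of_mem _ _ _ hj]
    exact hψ hij
  · rw [Set.piecewise_eq_of_notMem _ _ _ hj, id]
    by_cases hi : i ∈ D
    · rw [Set.piecewise_eq_of_mem _ _ _ hi]
      exact le_of_not_ge fun h => hj (hD h (hmaps hi))
    · rwa [Set.piecewise_eq_of_notMem _ _ _ hi]

lemma imageChain_piecewise_id (hD : IsLowerSet D) (hmaps : Set.MapsTo ψ D D)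
    (s : Finset α) :
    imageChain (D.piecewise ψ id) s =
      concatR (s.filter (· ∉ D)) (imageChain ψ (s.filter (· ∈ D))) := by
  set s₀ := s.filter (· ∈ D)
  set s₁ := s.filter (· ∉ D)
  have hlt : ∀ x ∈ s₀.image ψ, ∀ y ∈ s₁, x < y := by
    simp only [Finset.mem_image, Finset.mem_filter, s₀, s₁]
    rintro _ ⟨x, ⟨-, hx⟩, rfl⟩ y ⟨-, hy⟩
    exact lt_of_not_ge fun h => hy (hD h (hmaps hx))
  have himage : s.image (D.piecewise ψ id) = s₀.image ψ ∪ s₁ := by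
    ext y
    simp only [Finset.mem_image, Finset.mem_union, Finset.mem_filter, s₀, s₁]
    constructor
    · rintro ⟨x, hx, rfl⟩
      by_cases hxD : x ∈ D
      · exact Or.inl ⟨x, ⟨hx, hxD⟩, (Set.piecewise_eq_of_mem _ _ _ hxD).symm⟩
      · exact Or.inr ⟨by rwa [Set.piecewise_eq_of_notMem _ _ _ hxD], by
          rwa [Set.piecewise_eq_of_notMem _ _ _ hxD]⟩
    · rintro (⟨x, ⟨hx, hxD⟩, rfl⟩ | ⟨hy, hyD⟩)
      · exact ⟨x, hx, Set.piecewise_eq_of_mem _ _ _ hxD⟩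
      · exact ⟨y, hy, Set.piecewise_eq_of_notMem _ _ _ hyD⟩
  have hdisj : Disjoint (s₀.image ψ) s₁ :=
    Finset.disjoint_left.mpr fun x hx hx' => (hlt x hx x hx').false
  have hcard : s.card = s₀.card + s₁.card := (Finset.card_filter_add_card_filter_not _).symm
  rw [imageChain, imageChain, himage, Finset.card_union_of_disjoint hdisj, hcard]
  by_cases hinj : (s₀.image ψ).card = s₀.card
  · rw [if_pos (by rw [hinj]), if_pos hinj, concatR_single, if_pos hlt]
  · rw [if_neg (by omega), if_neg hinj, map_zero]

end LowerSetPiecewise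

section FPhi

variable {m n : ℕ} {φ : Fin (n+1) → Fin 2}

abbrev phibarZeroSet (m n : ℕ) (φ : Fin (n+1) → Fin 2) : Set (Fin (m+1+n+1)) :=
  {i | phibar m n φ i = 0}

lemma isLowerSet_phibarZeroSet (hφ : Monotone φ) : IsLowerSet (phibarZeroSet m n φ) := by
  intro j i hij hj
  have hij' := Fin.le_iff_val_le_val.mp hij
  simp only [phibarZeroSet, Set.mem_ofPred_eq, phibar] at hj ⊢
  by_cases hi : (i : ℕ) ≤ m
  · rw [if_pos hi]
  · rw [if_neg hi, ← Fin.le_zero_iff]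
    rw [if_neg (by omega)] at hj
    exact hj ▸ hφ (Fin.mk_le_mk.mpr (by omega))

lemma elM_mem_phibarZeroSet : elM m n ∈ phibarZeroSet m n φ := by
  simp [phibar, elM]

theorem fPhi_eq (hφ : Monotone φ) :
    fPhi m n φ =
      chMap ((phibarZeroSet m n φ).piecewise (min · (elM m n)) id)
        + chMap ((phibarZeroSet m n φ).piecewise (max · (elM m n)) id)
        - chMap ((phibarZeroSet m n φ).piecewise (fun _ => elM m n) id) := by
  have hD := isLowerSet_phibarZeroSet (m := m) hφ
  have hM := elM_mem_phibarZeroSet (m := m) (n := n) (φ := φ)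
  refine Ch.hom_ext fun s => ?_
  have h₁ : s.filter (· ∉ phibarZeroSet m n φ) = s.filter (phibar m n φ · = 1) :=
    Finset.filter_congr fun i _ => ⟨Fin.eq_one_of_ne_zero _, fun h => by simp [h]⟩
  rw [fPhi_single, LinearMap.sub_apply, LinearMap.add_apply, chMap_single, chMap_single,
    chMap_single, imageChain_piecewise_id hD (hD.mapsTo_min _),
    imageChain_piecewise_id hD (Set.mapsTo_max_of_mem hM),
    imageChain_piecewise_id hD fun _ _ => hM, ← map_add, ← map_sub, h₁, fPhiAux, fnAux_eq]
  rfl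

end FPhi

/-- STATEMENT 13: for every monotone `φ : [n] → [1]`, `f_φ` commutes with the differentials
and the augmentation, hence is an endomorphism of the augmented chain complex `C(m+1+n)`. -/
theorem fPhi_chain_complex_endomorphism (m n : ℕ) (φ : Fin (n+1) →o Fin 2) :
    (chD (Fin (m+1+n+1))).comp (fPhi m n ⇑φ) = (fPhi m n ⇑φ).comp (chD (Fin (m+1+n+1))) ∧
    (chE (Fin (m+1+n+1))).comp (fPhi m n ⇑φ) = chE (Fin (m+1+n+1)) := by
  have hD := isLowerSet_phibarZeroSet (m := m) φ.monotone
  have hM := elM_mem_phibarZeroSet (m := m) (n := n) (φ := φ)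
  have hmin : Monotone ((phibarZeroSet m n φ).piecewise (min · (elM m n)) id) :=
    (monotone_id.min monotone_const).piecewise_id_of_isLowerSet hD (hD.mapsTo_min _)
  have hmax : Monotone ((phibarZeroSet m n φ).piecewise (max · (elM m n)) id) :=
    (monotone_id.max monotone_const).piecewise_id_of_isLowerSet hD (Set.mapsTo_max_of_mem hM)
  have hconst : Monotone ((phibarZeroSet m n φ).piecewise (fun _ => elM m n) id) :=
    monotone_const.piecewise_id_of_isLowerSet hD fun _ _ => hM
  rw [fPhi_eq φ.monotone]
  constructor
  · rw [LinearMap.comp_sub, LinearMap.comp_add, LinearMap.sub_comp, LinearMap.add_comp,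
      chD_comp_chMap hmin, chD_comp_chMap hmax, chD_comp_chMap hconst]
  · rw [LinearMap.comp_sub, LinearMap.comp_add, chE_comp_chMap, chE_comp_chMap, chE_comp_chMap,
      add_sub_cancel_right]

end
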